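/- For odd n = 2t+1, the maximal size of a code X ⊆ 𝒜^n that is closed under reverse complementation, contains no self reverse complementary word, and whose distinct codewords pairwise share no common stem, is exactly 16. -/

import Mathlib

inductive DNA : Type
  | A | C | G | T
deriving DecidableEq, Inhabited

instance : Fintype DNA where
  elems := {DNA.A, DNA.C, DNA.G, DNA.T}
  complete := fun x => by cases x <;> decide

/-- Watson-Crick complement: A↔T, C↔G. -/
def DNA.compl : DNA → DNA
  | .A => .T
  | .T => .A
  | .C => .G
  | .G => .C

/-- Reverse complement of a DNA word. -/
def revComp {n : ℕ} (x : Fin n → DNA) : Fin n → DNA :=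
  fun i => (x i.rev).compl

/-- The i-th term s_i^w(x,y) of the additive stem w-similarity. -/
def stemTerm (w : DNA → DNA → ℝ) {n : ℕ} (x y : Fin n → DNA) (i : ℕ) : ℝ :=
  if h : i + 1 < n then
    if x ⟨i, by omega⟩ = y ⟨i, by omega⟩ ∧ x ⟨i + 1, h⟩ = y ⟨i + 1, h⟩ then
      w (x ⟨i, by omega⟩) (x ⟨i + 1, h⟩)
    else 0
  else 0

/-- Additive stem w-similarity S_w(x,y). -/
def stemSim (w : DNA → DNA → ℝ) {n : ℕ} (x y : Fin n → DNA) : ℝ :=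
  ∑ i ∈ Finset.range (n - 1), stemTerm w x y i

/-- Additive stem w-distance D_w(x,y) = S_w(x,x) - S_w(x,y). -/
def stemDist (w : DNA → DNA → ℝ) {n : ℕ} (x y : Fin n → DNA) : ℝ :=
  stemSim w x x - stemSim w x y

/-- x and y share a common stem at some position i ∈ [n-1]. -/
def commonStem {n : ℕ} (x y : Fin n → DNA) : Prop :=
  ∃ i : ℕ, ∃ h : i + 1 < n,
    x ⟨i, by omega⟩ = y ⟨i, by omega⟩ ∧ x ⟨i + 1, h⟩ = y ⟨i + 1, h⟩

/-- Alternating word x(a,b): a in odd positions, b in even positions (1-based). -/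
def alt (n : ℕ) (a b : DNA) : Fin n → DNA :=
  fun i => if i.val % 2 = 0 then a else b

/-!
Two codewords without a common stem have distinct first stems `(x₀, x₁)`, so a code has at
most `4 ^ 2 = 16` words. Conversely, a stem of the alternating word `x(a,b)` is `(a,b)` or
`(b,a)` according to the parity of its position, so two alternating words sharing a stem are
equal. For odd length the reverse complement of `x(a,b)` is `x(ā,b̄)`, which differs from
`x(a,b)` in its first letter.
-/

lemma DNA.compl_ne_self (d : DNA) : d.compl ≠ d := by
  cases d <;> decide

lemma commonStem_self {n : ℕ} (hn : 2 ≤ n) (x : Fin n → DNA) : commonStem x x :=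
  ⟨0, by omega, rfl, rfl⟩

def firstStem {n : ℕ} (hn : 2 ≤ n) (x : Fin n → DNA) : DNA × DNA :=
  (x ⟨0, by omega⟩, x ⟨1, by omega⟩)

lemma commonStem_of_firstStem_eq {n : ℕ} (hn : 2 ≤ n) {x y : Fin n → DNA}
    (h : firstStem hn x = firstStem hn y) : commonStem x y :=
  ⟨0, by omega, congrArg Prod.fst h, congrArg Prod.snd h⟩

theorem card_le_sixteen_of_not_commonStem {n : ℕ} (hn : 2 ≤ n) (X : Finset (Fin n → DNA))
    (hX : ∀ x ∈ X, ∀ y ∈ X, x ≠ y → ¬ commonStem x y) : X.card ≤ 16 :=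
  calc X.card ≤ Fintype.card (DNA × DNA) :=
        Finset.card_le_card_of_injOn (firstStem hn) (fun _ _ => Finset.mem_univ _)
          fun x hx y hy hxy => by_contra fun hne => hX x hx y hy hne
            (commonStem_of_firstStem_eq hn hxy)
    _ = 16 := rfl

lemma alt_eq_of_commonStem {n : ℕ} {a b c d : DNA}
    (h : commonStem (alt n a b) (alt n c d)) : a = c ∧ b = d := by
  obtain ⟨i, _, h₀, h₁⟩ := h
  simp only [alt] at h₀ h₁
  rcases Nat.mod_two_eq_zero_or_one i with hi | hi
  · rw [if_pos hi, if_pos hi] at h₀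
    rw [if_neg (by omega), if_neg (by omega)] at h₁
    exact ⟨h₀, h₁⟩
  · rw [if_neg (by omega), if_neg (by omega)] at h₀
    rw [if_pos (by omega), if_pos (by omega)] at h₁
    exact ⟨h₁, h₀⟩

lemma alt_injective {n : ℕ} (hn : 2 ≤ n) :
    Function.Injective fun p : DNA × DNA => alt n p.1 p.2 := fun p q hpq => by
  have h := commonStem_self hn (alt n p.1 p.2)
  nth_rewrite 2 [show alt n p.1 p.2 = alt n q.1 q.2 from hpq] at h
  exact Prod.ext_iff.2 (alt_eq_of_commonStem h)

lemma revComp_alt (t : ℕ) (a b : DNA) :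
    revComp (alt (2 * t + 1) a b) = alt (2 * t + 1) a.compl b.compl := by
  funext i
  have hi := i.isLt
  simp only [revComp, alt, Fin.val_rev]
  by_cases h : i.val % 2 = 0
  · rw [if_pos h, if_pos (by omega)]
  · rw [if_neg h, if_neg (by omega)]

lemma revComp_alt_ne (t : ℕ) (a b : DNA) :
    revComp (alt (2 * t + 1) a b) ≠ alt (2 * t + 1) a b := fun h =>
  DNA.compl_ne_self a <| by
    simpa [revComp_alt, alt] using congrFun h ⟨0, by omega⟩

def altCode (n : ℕ) : Finset (Fin n → DNA) :=
  Finset.univ.image fun p : DNA × DNA => alt n p.1 p.2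

lemma mem_altCode {n : ℕ} {x : Fin n → DNA} : x ∈ altCode n ↔ ∃ a b, alt n a b = x := by
  simp [altCode]

lemma card_altCode {n : ℕ} (hn : 2 ≤ n) : (altCode n).card = 16 := by
  rw [altCode, Finset.card_image_of_injective _ (alt_injective hn)]
  rfl

/-- For odd n = 2t+1, the maximal size of a code closed under reverse
complementation, without self reverse complementary words, and whose distinct
codewords pairwise share no common stem, is exactly 16. -/
theorem stmt9 {t : ℕ} (ht : 1 ≤ t) :
    IsGreatest {N : ℕ | ∃ X : Finset (Fin (2 * t + 1) → DNA), X.card = N ∧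
      (∀ x ∈ X, revComp x ∈ X) ∧ (∀ x ∈ X, revComp x ≠ x) ∧
      (∀ x ∈ X, ∀ y ∈ X, x ≠ y → ¬ commonStem x y)} 16 := by
  have hn : 2 ≤ 2 * t + 1 := by omega
  refine ⟨⟨altCode _, card_altCode hn, ?_, ?_, ?_⟩, ?_⟩
  · rintro x hx
    obtain ⟨a, b, rfl⟩ := mem_altCode.1 hx
    exact mem_altCode.2 ⟨a.compl, b.compl, (revComp_alt t a b).symm⟩
  · rintro x hx
    obtain ⟨a, b, rfl⟩ := mem_altCode.1 hx
    exact revComp_alt_ne t a b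
  · rintro x hx y hy hxy hstem
    obtain ⟨a, b, rfl⟩ := mem_altCode.1 hx
    obtain ⟨c, d, rfl⟩ := mem_altCode.1 hy
    obtain ⟨rfl, rfl⟩ := alt_eq_of_commonStem hstem
    exact hxy rfl
  · rintro N ⟨X, rfl, -, -, hX⟩
    exact card_le_sixteen_of_not_commonStem hn X hX
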